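/- Let P be a finite set, Q a finite set of quartets over P, let q = [p_i p_j | p_k p_l] ∈ Q, and let (A,B) be a cut of H(P,Q) with p_i, p_k, p_l ∈ A and p_j, γ_k^q, γ_l^q ∈ B. Then mim_{H(P,Q)}(A,B) ≥ 3: some edge of the path p_i − u_i^q − u_j^q − p_j has one endpoint in A and one in B, and any such crossing edge together with the edges p_k γ_k^q and p_l γ_l^q forms an induced matching of the bipartite graph H(P,Q)[A,B]. -/

import Mathlib

open SimpleGraph

/-- An induced matching of `G`: a set of edges of `G` that pairwise share no endpoint and
such that no edge of `G` joins an endpoint of one edge of the set to an endpoint of a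
different edge of the set. -/
def IsInducedMatching {V : Type} (G : SimpleGraph V) (M : Set (Sym2 V)) : Prop :=
  M ⊆ G.edgeSet ∧
    ∀ e ∈ M, ∀ f ∈ M, e ≠ f → ∀ x ∈ e, ∀ y ∈ f, x ≠ y ∧ ¬ G.Adj x y

/-- The bipartite graph `G[A, Aᶜ]` consisting of the edges of `G` crossing the cut `(A, Aᶜ)`. -/
def cutGraph {V : Type} (G : SimpleGraph V) (A : Set V) : SimpleGraph V where
  Adj x y := G.Adj x y ∧ ((x ∈ A ∧ y ∉ A) ∨ (x ∉ A ∧ y ∈ A))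
  symm := by
    constructor
    rintro x y ⟨h, h'⟩
    exact ⟨h.symm, by tauto⟩
  loopless := by
    constructor
    rintro x ⟨h, -⟩
    exact G.loopless.irrefl x h

/-- The graph `G − E[Xᶜ]`, obtained from `G` by deleting all edges with both endpoints
outside of `X`. -/
def delOutside {V : Type} (G : SimpleGraph V) (X : Set V) : SimpleGraph V where
  Adj x y := G.Adj x y ∧ (x ∈ X ∨ y ∈ X)
  symm := by
    constructor
    rintro x y ⟨h, h'⟩
    exact ⟨h.symm, h'.symm⟩
  loopless := by
    constructor
    rintro x ⟨h, -⟩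
    exact G.loopless.irrefl x h

/-- The mim-value of the cut `(A, Aᶜ)`: the maximum size of an induced matching of `G[A, Aᶜ]`. -/
noncomputable def mimValue {V : Type} (G : SimpleGraph V) (A : Set V) : ℕ :=
  sSup {n | ∃ M : Set (Sym2 V), IsInducedMatching (cutGraph G A) M ∧ M.ncard = n}

/-- The sim-value of the cut `(A, Aᶜ)`: the maximum size of a set of crossing edges of `G`
that is an induced matching of `G`. -/
noncomputable def simValue {V : Type} (G : SimpleGraph V) (A : Set V) : ℕ :=
  sSup {n | ∃ M : Set (Sym2 V), M ⊆ (cutGraph G A).edgeSet ∧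
    IsInducedMatching G M ∧ M.ncard = n}

/-- The upper-induced matching number of `X`: the maximum size of a set of crossing edges of
`G` that is an induced matching of `G − E[Xᶜ]`. -/
noncomputable def upperIMN {V : Type} (G : SimpleGraph V) (X : Set V) : ℕ :=
  sSup {n | ∃ M : Set (Sym2 V), M ⊆ (cutGraph G X).edgeSet ∧
    IsInducedMatching (delOutside G X) M ∧ M.ncard = n}

/-- The omim-value of the cut `(A, Aᶜ)`. -/
noncomputable def omimValue {V : Type} (G : SimpleGraph V) (A : Set V) : ℕ :=
  min (upperIMN G A) (upperIMN G Aᶜ)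

/-- The Omim-value of the cut `(A, Aᶜ)`. -/
noncomputable def bigOmimValue {V : Type} (G : SimpleGraph V) (A : Set V) : ℕ :=
  max (upperIMN G A) (upperIMN G Aᶜ)

/-- A branch decomposition over a vertex set `V`: a finite ternary tree (every vertex has
degree 1 or 3) together with a bijection from `V` to its set of leaves. -/
structure BranchDecomp (V : Type) : Type 1 where
  τ : Type
  tree : SimpleGraph τ
  finite : Finite τ
  isTree : tree.IsTree
  ternary : ∀ t : τ, (tree.neighborSet t).ncard = 1 ∨ (tree.neighborSet t).ncard = 3
  toLeaf : V → τ
  leafBij : Set.BijOn toLeaf Set.univ {t | (tree.neighborSet t).ncard = 1}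

/-- The side of the cut induced by the tree edge `xy` that contains the endpoint `x`:
the set of vertices of `V` whose leaf lies in the component of `T − xy` containing `x`. -/
def BranchDecomp.side {V : Type} (D : BranchDecomp V) (x y : D.τ) : Set V :=
  {v | (D.tree.deleteEdges {s(x, y)}).Reachable (D.toLeaf v) x}

/-- The width of a branch decomposition with respect to a cut-value function `val`:
the maximum of `val` over all cuts induced by edges of the tree. -/
noncomputable def BranchDecomp.width {V : Type} (D : BranchDecomp V) (val : Set V → ℕ) : ℕ :=
  sSup {n | ∃ x y : D.τ, D.tree.Adj x y ∧ n = val (D.side x y)}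

/-- A branch decomposition is a caterpillar if its internal (degree-3) vertices induce a path. -/
def BranchDecomp.IsCaterpillar {V : Type} (D : BranchDecomp V) : Prop :=
  ∃ n : ℕ, Nonempty
    ((D.tree.induce {t | (D.tree.neighborSet t).ncard = 3}) ≃g SimpleGraph.pathGraph n)

noncomputable def mimWidth {V : Type} (G : SimpleGraph V) : ℕ :=
  sInf {n | ∃ D : BranchDecomp V, D.width (mimValue G) = n}

noncomputable def simWidth {V : Type} (G : SimpleGraph V) : ℕ :=
  sInf {n | ∃ D : BranchDecomp V, D.width (simValue G) = n}

noncomputable def omimWidth {V : Type} (G : SimpleGraph V) : ℕ :=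
  sInf {n | ∃ D : BranchDecomp V, D.width (omimValue G) = n}

noncomputable def bigOmimWidth {V : Type} (G : SimpleGraph V) : ℕ :=
  sInf {n | ∃ D : BranchDecomp V, D.width (bigOmimValue G) = n}

noncomputable def linMimWidth {V : Type} (G : SimpleGraph V) : ℕ :=
  sInf {n | ∃ D : BranchDecomp V, D.IsCaterpillar ∧ D.width (mimValue G) = n}

noncomputable def linSimWidth {V : Type} (G : SimpleGraph V) : ℕ :=
  sInf {n | ∃ D : BranchDecomp V, D.IsCaterpillar ∧ D.width (simValue G) = n}

noncomputable def linOmimWidth {V : Type} (G : SimpleGraph V) : ℕ :=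
  sInf {n | ∃ D : BranchDecomp V, D.IsCaterpillar ∧ D.width (omimValue G) = n}

noncomputable def linBigOmimWidth {V : Type} (G : SimpleGraph V) : ℕ :=
  sInf {n | ∃ D : BranchDecomp V, D.IsCaterpillar ∧ D.width (bigOmimValue G) = n}

/-- A quartet `[ab|cd]` over `P`: four pairwise distinct elements of `P`, partitioned into
the two unordered pairs `{a, b}` and `{c, d}`. -/
structure Quartet (P : Type) where
  a : P
  b : P
  c : P
  d : P
  hab : a ≠ b
  hac : a ≠ c
  had : a ≠ d
  hbc : b ≠ c
  hbd : b ≠ d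
  hcd : c ≠ d

/-- The four elements of a quartet, indexed by `Fin 4`. -/
def Quartet.elem {P : Type} (q : Quartet P) : Fin 4 → P := ![q.a, q.b, q.c, q.d]

/-- Whether two indices in `Fin 4` correspond to the same side (pair) of a quartet. -/
def sameSide (i j : Fin 4) : Prop := (i.val < 2 ∧ j.val < 2) ∨ (2 ≤ i.val ∧ 2 ≤ j.val)

/-- A ternary tree with leaves labeled by `P` satisfies the quartet `[ab|cd]` if some edge of
the tree separates the leaves labeled `a, b` from the leaves labeled `c, d`. -/
def BranchDecomp.Satisfies {P : Type} (D : BranchDecomp P) (q : Quartet P) : Prop :=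
  ∃ x y : D.τ, D.tree.Adj x y ∧
    q.a ∈ D.side x y ∧ q.b ∈ D.side x y ∧ q.c ∉ D.side x y ∧ q.d ∉ D.side x y

/-- A linear order `le` on `P` satisfies the quartet `[ab|cd]` if both `a` and `b` are
smaller than both `c` and `d`, or both `c` and `d` are smaller than both `a` and `b`. -/
def OrdSatisfies {P : Type} (le : P → P → Prop) (q : Quartet P) : Prop :=
  (le q.a q.c ∧ le q.a q.d ∧ le q.b q.c ∧ le q.b q.d) ∨
  (le q.c q.a ∧ le q.d q.a ∧ le q.c q.b ∧ le q.d q.b)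

/-- The vertices of the graph `G(P, Q)`: the points of `P` together with the vertices
`u_x^q` for `q ∈ Q` and `x` one of the four elements of `q` (indexed by `Fin 4`). -/
inductive QVert (P : Type) (Q : Finset (Quartet P)) : Type
  | pt (p : P)
  | u (q : {q : Quartet P // q ∈ Q}) (i : Fin 4)

/-- Base relation generating the edges of `G(P, Q)`. -/
def qRel {P : Type} {Q : Finset (Quartet P)} : QVert P Q → QVert P Q → Prop
  | QVert.pt p, QVert.u q i => p = q.1.elem i
  | QVert.u q i, QVert.u q' j => q = q' → sameSide i j
  | _, _ => False

/-- The graph `G(P, Q)` of the sim-width/omim-width/Omim-width reduction. -/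
def quartetGraph (P : Type) (Q : Finset (Quartet P)) : SimpleGraph (QVert P Q) :=
  SimpleGraph.fromRel qRel

/-- The vertices of the graph `G'(P, Q)`: the points of `P`, the vertices `u_x^q`, and the
vertices `γ_x^q`. -/
inductive GpVert (P : Type) (Q : Finset (Quartet P)) : Type
  | pt (p : P)
  | u (q : {q : Quartet P // q ∈ Q}) (i : Fin 4)
  | g (q : {q : Quartet P // q ∈ Q}) (i : Fin 4)

/-- Base relation generating the edges of `G'(P, Q)`. -/
def gpRel {P : Type} {Q : Finset (Quartet P)} : GpVert P Q → GpVert P Q → Prop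
  | GpVert.pt p, GpVert.u q i => p = q.1.elem i
  | GpVert.pt p, GpVert.g q i => p = q.1.elem i
  | GpVert.u q i, GpVert.u q' j => q = q' → sameSide i j
  | GpVert.u q _, GpVert.g q' _ => q ≠ q'
  | GpVert.g q _, GpVert.u q' _ => q ≠ q'
  | GpVert.g _ _, GpVert.g _ _ => True
  | _, _ => False

/-- The graph `G'(P, Q)` of the mim-width reduction. -/
def gpGraph (P : Type) (Q : Finset (Quartet P)) : SimpleGraph (GpVert P Q) :=
  SimpleGraph.fromRel gpRel

/-- Base relation generating the edges of `H(P, Q)`; the extra vertex `ω` is `none`,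
adjacent exactly to the vertices of `U`. -/
def hRel {P : Type} {Q : Finset (Quartet P)} :
    Option (GpVert P Q) → Option (GpVert P Q) → Prop
  | some x, some y => gpRel x y
  | none, some (GpVert.u _ _) => True
  | _, _ => False

/-- The graph `H(P, Q)`, obtained from `G'(P, Q)` by adding a vertex `ω` adjacent to all of `U`. -/
def hGraph (P : Type) (Q : Finset (Quartet P)) : SimpleGraph (Option (GpVert P Q)) :=
  SimpleGraph.fromRel hRel

/-- The three edges of the path `p_i − u_i^q − u_j^q − p_j` in `H(P,Q)`. -/
def hTopPath {P : Type} {Q : Finset (Quartet P)} (q : Quartet P) (hq : q ∈ Q) :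
    Set (Sym2 (Option (GpVert P Q))) :=
  {s(some (GpVert.pt q.a), some (GpVert.u ⟨q, hq⟩ 0)),
    s(some (GpVert.u ⟨q, hq⟩ 0), some (GpVert.u ⟨q, hq⟩ 1)),
    s(some (GpVert.u ⟨q, hq⟩ 1), some (GpVert.pt q.b))}

section Aux15
variable {P : Type} {Q : Finset (Quartet P)}

lemma cutGraph_adj {V : Type} (G : SimpleGraph V) (A : Set V) (x y : V) :
    (cutGraph G A).Adj x y ↔ G.Adj x y ∧ ((x ∈ A ∧ y ∉ A) ∨ (x ∉ A ∧ y ∈ A)) := Iff.rfl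

lemma hGraph_adj (x y : Option (GpVert P Q)) :
    (hGraph P Q).Adj x y ↔ x ≠ y ∧ (hRel x y ∨ hRel y x) := by
  simp [hGraph]

@[simp] lemma elem0 (q : Quartet P) : q.elem 0 = q.a := rfl
@[simp] lemma elem1 (q : Quartet P) : q.elem 1 = q.b := rfl
@[simp] lemma elem2 (q : Quartet P) : q.elem 2 = q.c := rfl
@[simp] lemma elem3 (q : Quartet P) : q.elem 3 = q.d := rfl

instance [Finite P] : Finite (GpVert P Q) := by
  have hinj : Function.Injective
      (fun v : GpVert P Q => match v with
        | .pt p => (Sum.inl p : P ⊕ (({q : Quartet P // q ∈ Q} × Fin 4) ⊕ ({q : Quartet P // q ∈ Q} × Fin 4)))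
        | .u q i => Sum.inr (Sum.inl (q, i))
        | .g q i => Sum.inr (Sum.inr (q, i))) := by
    intro a b h
    cases a <;> cases b <;> simp_all
  exact Finite.of_injective _ hinj

end Aux15


/-- If `q = [p_i p_j | p_k p_l] ∈ Q` and `(A, B)` is a cut of `H(P,Q)` with
`p_i, p_k, p_l ∈ A` and `p_j, γ_k^q, γ_l^q ∈ B`, then some edge of the path
`p_i − u_i^q − u_j^q − p_j` crosses the cut, and any such crossing edge together with
`p_k γ_k^q` and `p_l γ_l^q` forms an induced matching of `H(P,Q)[A,B]`; in particular
`mim(A,B) ≥ 3`. -/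
theorem stmt15 {P : Type} [Fintype P] (Q : Finset (Quartet P)) (q : Quartet P) (hq : q ∈ Q)
    (A : Set (Option (GpVert P Q)))
    (hi : some (GpVert.pt q.a) ∈ A) (hk : some (GpVert.pt q.c) ∈ A)
    (hl : some (GpVert.pt q.d) ∈ A)
    (hj : some (GpVert.pt q.b) ∉ A)
    (hgk : some (GpVert.g ⟨q, hq⟩ 2) ∉ A) (hgl : some (GpVert.g ⟨q, hq⟩ 3) ∉ A) :
    (∃ e ∈ hTopPath q hq, e ∈ (cutGraph (hGraph P Q) A).edgeSet) ∧
    (∀ e ∈ hTopPath q hq, e ∈ (cutGraph (hGraph P Q) A).edgeSet →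
      IsInducedMatching (cutGraph (hGraph P Q) A)
        {e, s(some (GpVert.pt q.c), some (GpVert.g ⟨q, hq⟩ 2)),
          s(some (GpVert.pt q.d), some (GpVert.g ⟨q, hq⟩ 3))} ∧
      ({e, s(some (GpVert.pt q.c), some (GpVert.g ⟨q, hq⟩ 2)),
          s(some (GpVert.pt q.d), some (GpVert.g ⟨q, hq⟩ 3))} :
        Set (Sym2 (Option (GpVert P Q)))).ncard = 3) ∧
    3 ≤ mimValue (hGraph P Q) A := by

  classical
  -- abbreviations
  have hba := q.hab.symm
  have hca := q.hac.symm
  have hda := q.had.symm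
  have hcb := q.hbc.symm
  have hdb := q.hbd.symm
  have hdc := q.hcd.symm
  -- the two gamma edges cross the cut
  have hf2 : s(some (GpVert.pt q.c), some (GpVert.g ⟨q, hq⟩ 2)) ∈
      (cutGraph (hGraph P Q) A).edgeSet := by
    rw [SimpleGraph.mem_edgeSet, cutGraph_adj]
    refine ⟨?_, Or.inl ⟨hk, hgk⟩⟩
    simp [hGraph_adj, hRel, gpRel]
  have hf3 : s(some (GpVert.pt q.d), some (GpVert.g ⟨q, hq⟩ 3)) ∈
      (cutGraph (hGraph P Q) A).edgeSet := by
    rw [SimpleGraph.mem_edgeSet, cutGraph_adj]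
    refine ⟨?_, Or.inl ⟨hl, hgl⟩⟩
    simp [hGraph_adj, hRel, gpRel]
  have main : ∀ e ∈ hTopPath q hq, e ∈ (cutGraph (hGraph P Q) A).edgeSet →
      IsInducedMatching (cutGraph (hGraph P Q) A)
        {e, s(some (GpVert.pt q.c), some (GpVert.g ⟨q, hq⟩ 2)),
          s(some (GpVert.pt q.d), some (GpVert.g ⟨q, hq⟩ 3))} ∧
      ({e, s(some (GpVert.pt q.c), some (GpVert.g ⟨q, hq⟩ 2)),
          s(some (GpVert.pt q.d), some (GpVert.g ⟨q, hq⟩ 3))} :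
        Set (Sym2 (Option (GpVert P Q)))).ncard = 3 := by
    intro e he hecross
    simp only [hTopPath, Set.mem_insert_iff, Set.mem_singleton_iff] at he
    have hIM : IsInducedMatching (cutGraph (hGraph P Q) A)
        {e, s(some (GpVert.pt q.c), some (GpVert.g ⟨q, hq⟩ 2)),
          s(some (GpVert.pt q.d), some (GpVert.g ⟨q, hq⟩ 3))} := by
      constructor
      · rintro f (rfl | rfl | rfl)
        · exact hecross
        · exact hf2
        · exact hf3
      · intro e1 he1 f1 hf1 hne x hx y hy
        rcases he with rfl | rfl | rfl <;>
        rcases he1 with rfl | rfl | rfl <;>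
        rcases hf1 with rfl | rfl | rfl <;>
        first
          | exact absurd rfl hne
          | (rw [Sym2.mem_iff] at hx hy
             rcases hx with rfl | rfl <;> rcases hy with rfl | rfl <;>
             refine ⟨by simp [q.hab, q.hac, q.had, q.hbc, q.hbd, q.hcd, hba, hca, hda, hcb, hdb, hdc], ?_⟩ <;>
             simp [cutGraph_adj, hGraph_adj, hRel, gpRel, sameSide,
               q.hab, q.hac, q.had, q.hbc, q.hbd, q.hcd, hba, hca, hda, hcb, hdb, hdc,
               hgk, hgl])
    refine ⟨hIM, ?_⟩
    -- cardinality 3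
    have hne23 : s(some (GpVert.pt q.c), some (GpVert.g ⟨q, hq⟩ 2)) ≠
        s(some (GpVert.pt q.d), some (GpVert.g ⟨q, hq⟩ 3)) := by
      simp [Sym2.eq_iff, q.hcd]
    have hne12 : e ∉ ({s(some (GpVert.pt q.c), some (GpVert.g ⟨q, hq⟩ 2)),
        s(some (GpVert.pt q.d), some (GpVert.g ⟨q, hq⟩ 3))} :
        Set (Sym2 (Option (GpVert P Q)))) := by
      rcases he with rfl | rfl | rfl <;>
        simp [Sym2.eq_iff, q.hac, q.had, q.hbc, q.hbd, hca, hda, hcb, hdb]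
    rw [Set.ncard_insert_of_notMem hne12 (by
      apply Set.Finite.insert; apply Set.finite_singleton),
      Set.ncard_pair hne23]
  -- existence of a crossing edge
  have hex : ∃ e ∈ hTopPath q hq, e ∈ (cutGraph (hGraph P Q) A).edgeSet := by
    by_cases h0 : some (GpVert.u ⟨q, hq⟩ 0) ∈ A
    · by_cases h1 : some (GpVert.u ⟨q, hq⟩ 1) ∈ A
      · refine ⟨s(some (GpVert.u ⟨q, hq⟩ 1), some (GpVert.pt q.b)),
          by simp [hTopPath], ?_⟩
        rw [SimpleGraph.mem_edgeSet, cutGraph_adj]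
        exact ⟨by simp [hGraph_adj, hRel, gpRel], Or.inl ⟨h1, hj⟩⟩
      · refine ⟨s(some (GpVert.u ⟨q, hq⟩ 0), some (GpVert.u ⟨q, hq⟩ 1)),
          by simp [hTopPath], ?_⟩
        rw [SimpleGraph.mem_edgeSet, cutGraph_adj]
        exact ⟨by simp [hGraph_adj, hRel, gpRel, sameSide], Or.inl ⟨h0, h1⟩⟩
    · refine ⟨s(some (GpVert.pt q.a), some (GpVert.u ⟨q, hq⟩ 0)),
        by simp [hTopPath], ?_⟩
      rw [SimpleGraph.mem_edgeSet, cutGraph_adj]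
      exact ⟨by simp [hGraph_adj, hRel, gpRel], Or.inl ⟨hi, h0⟩⟩
  refine ⟨hex, main, ?_⟩
  -- mim value bound
  obtain ⟨e, he, hecross⟩ := hex
  obtain ⟨hIM, hcard⟩ := main e he hecross
  have hmem : 3 ∈ {n | ∃ M : Set (Sym2 (Option (GpVert P Q))),
      IsInducedMatching (cutGraph (hGraph P Q) A) M ∧ M.ncard = n} :=
    ⟨_, hIM, hcard⟩
  haveI : Finite (Option (GpVert P Q)) :=
    Finite.of_equiv (GpVert P Q ⊕ PUnit.{1}) (Equiv.optionEquivSumPUnit _).symm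
  refine le_csSup ⟨Nat.card (Sym2 (Option (GpVert P Q))), ?_⟩ hmem
  rintro n ⟨M, -, rfl⟩
  calc M.ncard ≤ (Set.univ : Set (Sym2 (Option (GpVert P Q)))).ncard :=
        Set.ncard_le_ncard (Set.subset_univ M) Set.finite_univ
    _ = _ := Set.ncard_univ _
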